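/- arXiv:2012.12147 — 2 statements merged into one kernel-verified Lean document; each statement's English description precedes it below -/
import Mathlib

section
/- Let K be a commutative ring, M a K-module with quadratic form q and associated bilinear form ⟨m,m'⟩ = q(m+m') - q(m) - q(m'). For u, v ∈ M with q(u) = 0 and ⟨u,v⟩ = 0, the ESD-transvection T(u,v): M → M defined by m ↦ m + u⟨v,m⟩ - v⟨u,m⟩ - u·q(v)·⟨u,m⟩ preserves the quadratic form: q(T(u,v)(m)) = q(m) for all m ∈ M. -/
open QuadraticMap

/-- The Eichler–Siegel–Dickson transvection `T(u,v)` with parameters `u, v`: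
`m ↦ m + u⟨v,m⟩ - v⟨u,m⟩ - u·q(v)·⟨u,m⟩`. -/
def ESD {K M : Type*} [CommRing K] [AddCommGroup M] [Module K M]
    (q : QuadraticForm K M) (u v m : M) : M :=
  m + polar q v m • u - polar q u m • v - (q v * polar q u m) • u

theorem esd_preserves_quadratic_form {K M : Type*} [CommRing K] [AddCommGroup M] [Module K M]
    (q : QuadraticForm K M) (u v : M) (hu : q u = 0) (huv : polar q u v = 0) :
    ∀ m : M, q (ESD q u v m) = q m := by
  intro m
  have key : ESD q u v m
      = m + (polar q v m - q v * polar q u m) • u - polar q u m • v := by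
    simp [ESD, sub_smul, mul_smul]
    abel
  rw [key, sub_eq_add_neg, QuadraticMap.map_add q, QuadraticMap.map_add q,
    QuadraticMap.map_smul, polar_neg_right, polar_smul_right, polar_smul_right,
    QuadraticMap.map_neg, QuadraticMap.map_smul, polar_add_left, polar_smul_left,
    huv, hu, polar_comm q m v]
  simp only [smul_eq_mul, smul_zero, polar_comm q m u, mul_zero, add_zero]
  ring
end

section
/- Let K be a commutative ring. If a K-algebra A is locally finite (every finite subset is contained in a K-subalgebra that is finitely generated as a K-module), then any quotient algebra of A and any subalgebra of a locally finite algebra of the form {x ∈ M_n(K) | xN ≤ N} obtained as image is locally finite. In particular, for a finitely generated K-module M, End_K(M) is locally finite. -/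
/-- A `K`-algebra `A` is locally finite if every finite subset of `A` is contained in a
`K`-subalgebra which is finitely generated as a `K`-module. -/
def IsLocallyFiniteAlgebra (K A : Type*) [CommRing K] [Ring A] [Algebra K A] : Prop :=
  ∀ s : Finset A, ∃ S : Subalgebra K A, (↑s : Set A) ⊆ (S : Set A) ∧ Module.Finite K S

/-!
The only real point is that a finitely generated subalgebra `K[s]` of a `K`-finite algebra `S` is
`K`-finite although `K` need not be Noetherian. If `t` spans `S`, the finitely many coefficients
expressing `1`, the products `t * t` and the elements of `s` in terms of `t` generate a
finitely generated, hence Noetherian, subring `R₀ ⊆ K`. The `R₀`-span of `t` is then an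
`R₀`-finite algebra containing `s`, so `R₀[s]` is `R₀`-finite and `K[s] = K · R₀[s]` is
`K`-finite. For `End_K M`, choose `π : Kⁿ ↠ M`: every endomorphism of `M` lifts to one of
`Kⁿ` preserving `ker π`, so `End_K M` is a quotient of a subalgebra of the finite algebra
`End_K Kⁿ`.
-/

open Submodule Pointwise

theorem Algebra.finite_adjoin_of_subset_span {R A : Type*} [CommRing R] [IsNoetherianRing R]
    [Ring A] [Algebra R A] {s : Set A} (t : Set A) (ht : t.Finite) (h_one : 1 ∈ span R t)
    (h_mul : t * t ⊆ span R t) (hs : s ⊆ span R t) :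
    Module.Finite R (Algebra.adjoin R s) := by
  have h_mul_span : ∀ x y, x ∈ span R t → y ∈ span R t → x * y ∈ span R t :=
    fun x y hx hy => mul_le.mp ((span_mul_span R t t).trans_le (span_le.mpr h_mul)) x hx y hy
  have h_le : Algebra.adjoin R s ≤ (span R t).toSubalgebra h_one h_mul_span :=
    Algebra.adjoin_le hs
  exact Module.Finite.iff_fg.mpr
    (FG.of_le (fg_span ht) (S := Subalgebra.toSubmodule (Algebra.adjoin R s)) h_le)

theorem Algebra.finite_adjoin_of_tower {R K A : Type*} [CommRing R] [CommRing K] [Ring A]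
    [Algebra R K] [Algebra K A] [Algebra R A] [IsScalarTower R K A] (s : Set A)
    [h : Module.Finite R (Algebra.adjoin R s)] : Module.Finite K (Algebra.adjoin K s) := by
  obtain ⟨g, hg⟩ : (Subalgebra.toSubmodule (Algebra.adjoin R s)).FG := Module.Finite.iff_fg.mp h
  refine (Module.Finite.iff_fg (N := Subalgebra.toSubmodule (Algebra.adjoin K s))).mpr ⟨g, ?_⟩
  calc span K (g : Set A)
      = span K (span R (Submonoid.closure s : Set A) : Set A) := by
        rw [← Algebra.adjoin_eq_span (R := R), ← hg, span_span_of_tower]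
    _ = Subalgebra.toSubmodule (Algebra.adjoin K s) := by
        rw [Algebra.adjoin_eq_span, span_span_of_tower]

theorem Submodule.exists_finset_subset_span_adjoin_int {K A : Type*} [CommRing K]
    [AddCommGroup A] [Module K A] (t X : Finset A)
    (hX : (X : Set A) ⊆ (span K (t : Set A) : Set A)) :
    ∃ C : Finset K,
      (X : Set A) ⊆ (span (Algebra.adjoin ℤ (C : Set K)) (t : Set A) : Set A) := by
  classical
  have : ∀ x : X, ∃ f : A → K, ∑ i ∈ t, f i • i = x := fun x =>
    (mem_span_finset.mp (hX x.2)).imp fun _ h => h.2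
  choose f hf using this
  set C := Finset.univ.biUnion fun x : X => t.image (f x)
  refine ⟨C, fun x hx => ?_⟩
  suffices ∀ x : X, (x : A) ∈ span (Algebra.adjoin ℤ (C : Set K)) (t : Set A) from
    this ⟨x, hx⟩
  intro x
  rw [← hf x]
  refine sum_mem fun i hi => ?_
  have hc : f x i ∈ Algebra.adjoin ℤ (C : Set K) := Algebra.subset_adjoin <| by
    simpa [C] using ⟨x, x.2, i, hi, rfl⟩
  exact smul_mem _ (⟨f x i, hc⟩ : Algebra.adjoin ℤ (C : Set K)) (subset_span hi)

theorem Subalgebra.finite_adjoin_of_subset {K A : Type*} [CommRing K] [Ring A] [Algebra K A]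
    (S : Subalgebra K A) [Module.Finite K S] (s : Finset A) (hs : (s : Set A) ⊆ S) :
    Module.Finite K (Algebra.adjoin K (s : Set A)) := by
  classical
  obtain ⟨t, ht⟩ : (Subalgebra.toSubmodule S).FG := Module.Finite.iff_fg.mp ‹_›
  have ht_sub : (t : Set A) ⊆ S := fun x hx => by
    rw [SetLike.mem_coe, ← Subalgebra.mem_toSubmodule, ← ht]
    exact subset_span hx
  have hX : ((insert 1 (s ∪ t * t) : Finset A) : Set A) ⊆ (span K (t : Set A) : Set A) := by
    rw [ht]
    simp only [Finset.coe_insert, Finset.coe_union, Finset.coe_mul, Set.insert_subset_iff,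
      Set.union_subset_iff]
    exact ⟨S.one_mem, hs,
      Set.mul_subset_iff.mpr fun x hx y hy => S.mul_mem (ht_sub hx) (ht_sub hy)⟩
  obtain ⟨C, hC⟩ := exists_finset_subset_span_adjoin_int t _ hX
  simp only [Finset.coe_insert, Finset.coe_union, Finset.coe_mul, Set.insert_subset_iff,
    Set.union_subset_iff] at hC
  have : IsNoetherianRing (Algebra.adjoin ℤ (C : Set K)) := isNoetherianRing_of_fg ⟨C, rfl⟩
  have := Algebra.finite_adjoin_of_subset_span (t : Set A) t.finite_toSet hC.1 hC.2.2 hC.2.1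
  exact Algebra.finite_adjoin_of_tower (R := Algebra.adjoin ℤ (C : Set K)) _

namespace Submodule

variable {K V : Type*} [CommRing K] [AddCommGroup V] [Module K V] (N : Submodule K V)

def stabilizerSubalgebra : Subalgebra K (Module.End K V) where
  carrier := {f | N ≤ N.comap f}
  mul_mem' hf hg _ hv := hf (hg hv)
  add_mem' hf hg _ hv := N.add_mem (hf hv) (hg hv)
  algebraMap_mem' c _ hv := N.smul_mem c hv

def stabilizerToEndQuotient : N.stabilizerSubalgebra →ₐ[K] Module.End K (V ⧸ N) where
  toFun f := N.mapQ N f f.2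
  map_one' := linearMap_qext _ rfl
  map_mul' _ _ := linearMap_qext _ rfl
  map_zero' := linearMap_qext _ rfl
  map_add' _ _ := linearMap_qext _ rfl
  commutes' _ := linearMap_qext _ rfl

theorem stabilizerToEndQuotient_surjective [Module.Projective K V] :
    Function.Surjective N.stabilizerToEndQuotient := by
  intro f
  obtain ⟨g, hg⟩ := Module.projective_lifting_property N.mkQ (f ∘ₗ N.mkQ) N.mkQ_surjective
  have hg_apply (v : V) : N.mkQ (g v) = f (N.mkQ v) := LinearMap.congr_fun hg v
  have hg_mem : g ∈ N.stabilizerSubalgebra := fun v hv => by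
    rw [mem_comap, ← Quotient.mk_eq_zero, ← mkQ_apply, hg_apply, mkQ_apply,
      (Quotient.mk_eq_zero N).mpr hv, map_zero]
  exact ⟨⟨g, hg_mem⟩, linearMap_qext _ hg⟩

end Submodule

namespace IsLocallyFiniteAlgebra

variable {K A B : Type*} [CommRing K] [Ring A] [Ring B] [Algebra K A] [Algebra K B]

theorem iff_finite_adjoin :
    IsLocallyFiniteAlgebra K A ↔
      ∀ s : Finset A, Module.Finite K (Algebra.adjoin K (s : Set A)) :=
  ⟨fun h s => let ⟨S, hs, _⟩ := h s; S.finite_adjoin_of_subset s hs,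
    fun h s => ⟨_, Algebra.subset_adjoin, h s⟩⟩

theorem of_finite [Module.Finite K A] : IsLocallyFiniteAlgebra K A := fun _ =>
  ⟨⊤, fun _ _ => trivial, .equiv Subalgebra.topEquiv.symm.toLinearEquiv⟩

theorem of_surjective (φ : A →ₐ[K] B) (hφ : Function.Surjective φ)
    (hA : IsLocallyFiniteAlgebra K A) : IsLocallyFiniteAlgebra K B := by
  classical
  intro s
  obtain ⟨S, hS, _⟩ := hA (s.image (Function.surjInv hφ))
  refine ⟨S.map φ, fun b hb =>
    ⟨_, hS (Finset.mem_image_of_mem _ hb), Function.surjInv_eq hφ b⟩, ?_⟩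
  have : Module.Finite K (Subalgebra.toSubmodule (S.map φ)) := by
    rw [Subalgebra.map_toSubmodule]
    infer_instance
  exact this

theorem subalgebra (S : Subalgebra K A) (hA : IsLocallyFiniteAlgebra K A) :
    IsLocallyFiniteAlgebra K S := by
  classical
  refine iff_finite_adjoin.mpr fun s => ?_
  have := iff_finite_adjoin.mp hA (s.image S.val)
  have hmap : (Algebra.adjoin K (s : Set S)).map S.val
      = Algebra.adjoin K (s.image S.val : Set A) := by
    rw [AlgHom.map_adjoin, Finset.coe_image]
  exact .equiv ((Subalgebra.equivMapOfInjective _ S.val Subtype.val_injective).trans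
    (Subalgebra.equivOfEq _ _ hmap)).symm.toLinearEquiv

theorem moduleEnd {M : Type*} [AddCommGroup M] [Module K M] [Module.Finite K M] :
    IsLocallyFiniteAlgebra K (Module.End K M) := by
  obtain ⟨n, π, hπ⟩ := Module.Finite.exists_fin' K M
  let N := LinearMap.ker π
  let e := (π.quotKerEquivOfSurjective hπ).conjAlgEquiv K
  let φ := (e : Module.End K ((Fin n → K) ⧸ N) →ₐ[K] Module.End K M).comp
    N.stabilizerToEndQuotient
  have hφ : Function.Surjective φ := e.surjective.comp N.stabilizerToEndQuotient_surjective
  exact (of_finite.subalgebra _).of_surjective φ hφ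

end IsLocallyFiniteAlgebra

/-- Quotients (i.e. surjective images) of locally finite algebras are locally finite,
subalgebras of locally finite algebras are locally finite, and for a finitely generated
`K`-module `M` the endomorphism algebra `End_K(M)` is locally finite. -/
theorem locally_finite_closure_and_end
    (K : Type*) [CommRing K] :
    (∀ (A B : Type*) [Ring A] [Ring B] [Algebra K A] [Algebra K B]
        (φ : A →ₐ[K] B), Function.Surjective φ →
        IsLocallyFiniteAlgebra K A → IsLocallyFiniteAlgebra K B) ∧
    (∀ (A : Type*) [Ring A] [Algebra K A] (S : Subalgebra K A),
        IsLocallyFiniteAlgebra K A → IsLocallyFiniteAlgebra K S) ∧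
    (∀ (M : Type*) [AddCommGroup M] [Module K M], Module.Finite K M →
        IsLocallyFiniteAlgebra K (Module.End K M)) :=
  ⟨fun _ _ _ _ _ _ φ hφ hA => hA.of_surjective φ hφ,
    fun _ _ _ S hA => hA.subalgebra S,
    fun _ _ _ _ => IsLocallyFiniteAlgebra.moduleEnd⟩
end
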